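/- Let X₁,…,X_{k-1}, Z be i.i.d. uniform on [-1,1] and s ∈ [-1,0]. Then P(|min(X₁,…,X_{k-1},s)| < |Z|) = (2^k − (1−s)^k)/(k·2^{k-1}). -/

import Mathlib

open MeasureTheory

noncomputable def unif : Measure ℝ :=
  (2 : ENNReal)⁻¹ • (volume.restrict (Set.Icc (-1 : ℝ) 1))

/-!
Write `M = min(X₁, …, X_{k-1}, s) ≤ 0`. Conditioning on the `Xᵢ`, the probability that
`|M| < |Z|` is `1 - |M| = 1 + M`, so the answer is `E[1 + M]`. By the layer-cake formula this is
`∫₀^{1+s} P(M > t - 1) dt = ∫₀^{1+s} ((2 - t) / 2)^{k-1} dt`, since `M > t - 1` means that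
`t - 1 < s` and every `Xᵢ > t - 1`.
-/

open Set

lemma unif_apply {A : Set ℝ} (hA : MeasurableSet A) :
    unif A = 2⁻¹ * volume (A ∩ Icc (-1) 1) := by
  simp [unif, Measure.restrict_apply hA]

lemma two_inv_mul_ofReal_two_mul (a : ℝ) :
    (2 : ENNReal)⁻¹ * ENNReal.ofReal (2 * a) = ENNReal.ofReal a := by
  rw [ENNReal.ofReal_mul zero_le_two, ENNReal.ofReal_ofNat,
    ENNReal.inv_mul_cancel_left two_ne_zero ENNReal.ofNat_ne_top]

instance : IsProbabilityMeasure unif := by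
  refine ⟨?_⟩
  rw [unif_apply MeasurableSet.univ, univ_inter, Real.volume_Icc,
    show (1 : ℝ) - -1 = 2 * 1 by norm_num, two_inv_mul_ofReal_two_mul, ENNReal.ofReal_one]

lemma ae_unif_mem_Icc : ∀ᵐ y ∂unif, y ∈ Icc (-1 : ℝ) 1 :=
  Measure.ae_smul_measure (ae_restrict_mem measurableSet_Icc) _

lemma unif_Ioi {c : ℝ} (hc : -1 ≤ c) : unif (Ioi c) = ENNReal.ofReal ((1 - c) / 2) := by
  have hinter : Ioi c ∩ Icc (-1) 1 = Ioc c 1 := by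
    ext y
    simp only [mem_inter_iff, mem_Ioi, mem_Icc, mem_Ioc]
    grind
  rw [unif_apply measurableSet_Ioi, hinter, Real.volume_Ioc,
    ← two_inv_mul_ofReal_two_mul ((1 - c) / 2)]
  congr 2
  ring

lemma unif_lt_abs {t : ℝ} (ht : 0 ≤ t) : unif {y | t < |y|} = ENNReal.ofReal (1 - t) := by
  have hinter : {y : ℝ | t < |y|} ∩ Icc (-1) 1 = Ico (-1) (-t) ∪ Ioc t 1 := by
    ext y
    simp only [mem_inter_iff, mem_ofPred_eq, mem_Icc, mem_union, mem_Ico, mem_Ioc, lt_abs]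
    grind
  have hdisj : Disjoint (Ico (-1) (-t)) (Ioc t 1) :=
    disjoint_left.2 fun y hy hy' => by linarith [hy.2, hy'.1]
  rw [unif_apply (measurableSet_lt measurable_const continuous_abs.measurable), hinter,
    measure_union hdisj measurableSet_Ioc, Real.volume_Ico, Real.volume_Ioc,
    show -t - -1 = 1 - t by ring, ← two_mul,
    ENNReal.inv_mul_cancel_left two_ne_zero ENNReal.ofNat_ne_top]

variable {ι : Type*} [Fintype ι]

lemma ae_pi_unif_mem_Icc : ∀ᵐ x ∂Measure.pi fun _ : ι => unif, ∀ i, x i ∈ Icc (-1 : ℝ) 1 :=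
  ae_all_iff.2 fun _ => Measure.tendsto_eval_ae_ae ae_unif_mem_Icc

lemma pi_unif_forall_lt {c : ℝ} (hc : -1 ≤ c) :
    Measure.pi (fun _ : ι => unif) {x | ∀ i, c < x i}
      = ENNReal.ofReal ((1 - c) / 2) ^ Fintype.card ι := by
  have hpi : {x : ι → ℝ | ∀ i, c < x i} = univ.pi fun _ => Ioi c := by
    ext x
    simp
  rw [hpi, Measure.pi_pi, Finset.prod_const, Finset.card_univ, unif_Ioi hc]

lemma prod_unif_abs_lt_abs {α : Type*} [MeasurableSpace α] (μ : Measure α) [SFinite μ]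
    {f : α → ℝ} (hf : Measurable f) :
    (μ.prod unif) {p | |f p.1| < |p.2|} = ∫⁻ x, ENNReal.ofReal (1 - |f x|) ∂μ := by
  have hmeas : MeasurableSet {p : α × ℝ | |f p.1| < |p.2|} :=
    measurableSet_lt (by fun_prop) (by fun_prop)
  rw [Measure.prod_apply hmeas]
  exact lintegral_congr fun x => unif_lt_abs (t := |f x|) (abs_nonneg _)

lemma integral_two_sub_div_two_pow (n : ℕ) (a : ℝ) :
    ∫ t in (0 : ℝ)..a, ((2 - t) / 2) ^ n
      = (2 ^ (n + 1) - (2 - a) ^ (n + 1)) / ((n + 1) * 2 ^ n) := by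
  simp_rw [div_pow]
  rw [intervalIntegral.integral_div, intervalIntegral.integral_comp_sub_left (fun x => x ^ n) 2,
    integral_pow, sub_zero, div_div]

lemma setLIntegral_Ioo_two_sub_div_two_pow (n : ℕ) {a : ℝ} (ha₀ : 0 ≤ a) (ha₂ : a ≤ 2) :
    ∫⁻ t in Ioo 0 a, ENNReal.ofReal (((2 - t) / 2) ^ n)
      = ENNReal.ofReal ((2 ^ (n + 1) - (2 - a) ^ (n + 1)) / ((n + 1) * 2 ^ n)) := by
  have hint : IntegrableOn (fun t : ℝ => ((2 - t) / 2) ^ n) (Ioo 0 a) :=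
    (Continuous.integrableOn_Icc (by fun_prop)).mono_set Ioo_subset_Icc_self
  have hnonneg : 0 ≤ᵐ[volume.restrict (Ioo 0 a)] fun t : ℝ => ((2 - t) / 2) ^ n := by
    filter_upwards [ae_restrict_mem measurableSet_Ioo] with t ht
    exact pow_nonneg (by linarith [ht.2]) _
  rw [← ofReal_integral_eq_lintegral_ofReal hint hnonneg, ← integral_Ioc_eq_integral_Ioo,
    ← intervalIntegral.integral_of_le ha₀, integral_two_sub_div_two_pow]

section minWith

variable (h : (Finset.univ : Finset ι).Nonempty) (s : ℝ)

def minWith (x : ι → ℝ) : ℝ := min (Finset.univ.inf' h x) s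

lemma continuous_minWith : Continuous (minWith h s) :=
  (Continuous.finset_inf'_apply h fun i _ => continuous_apply i).min continuous_const

variable {h s}

lemma lt_minWith_iff {c : ℝ} {x : ι → ℝ} : c < minWith h s x ↔ c < s ∧ ∀ i, c < x i := by
  simp [minWith, Finset.lt_inf'_iff, and_comm]

lemma minWith_le (x : ι → ℝ) : minWith h s x ≤ s := min_le_right _ _

lemma le_minWith {c : ℝ} {x : ι → ℝ} (hs : c ≤ s) (hx : ∀ i, c ≤ x i) : c ≤ minWith h s x :=
  le_min (Finset.le_inf' h _ fun i _ => hx i) hs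

lemma pi_unif_lt_minWith {c : ℝ} (hc : -1 ≤ c) :
    Measure.pi (fun _ : ι => unif) {x | c < minWith h s x}
      = if c < s then ENNReal.ofReal ((1 - c) / 2) ^ Fintype.card ι else 0 := by
  split_ifs with hcs
  · simp_rw [lt_minWith_iff, hcs, true_and]
    exact pi_unif_forall_lt hc
  · simp [lt_minWith_iff, hcs]

lemma lintegral_one_add_minWith (hs₀ : -1 ≤ s) (hs₁ : s ≤ 1) :
    ∫⁻ x, ENNReal.ofReal (1 + minWith h s x) ∂Measure.pi (fun _ : ι => unif)
      = ENNReal.ofReal ((2 ^ (Fintype.card ι + 1) - (1 - s) ^ (Fintype.card ι + 1))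
          / ((Fintype.card ι + 1 : ℕ) * 2 ^ Fintype.card ι)) := by
  have hnonneg : 0 ≤ᵐ[Measure.pi fun _ : ι => unif] fun x => 1 + minWith h s x := by
    filter_upwards [ae_pi_unif_mem_Icc] with x hx
    rw [Pi.zero_apply]
    linarith [le_minWith (h := h) hs₀ fun i => (hx i).1]
  have htail : ∀ t ∈ Ioi (0 : ℝ), Measure.pi (fun _ : ι => unif) {x | t < 1 + minWith h s x}
      = (Iio (1 + s)).indicator (fun t => ENNReal.ofReal (((2 - t) / 2) ^ Fintype.card ι)) t := by
    intro t ht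
    simp_rw [← sub_lt_iff_lt_add']
    rw [pi_unif_lt_minWith (by linarith [mem_Ioi.1 ht])]
    simp only [indicator_apply, mem_Iio, ← sub_lt_iff_lt_add']
    split_ifs with hts
    · rw [← ENNReal.ofReal_pow (by linarith), show (1 - (t - 1)) / 2 = (2 - t) / 2 by ring]
    · rfl
  rw [lintegral_eq_lintegral_meas_lt _ hnonneg
      ((continuous_const.add (continuous_minWith h s)).aemeasurable),
    setLIntegral_congr_fun measurableSet_Ioi htail, lintegral_indicator measurableSet_Iio,
    Measure.restrict_restrict measurableSet_Iio, Iio_inter_Ioi,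
    setLIntegral_Ioo_two_sub_div_two_pow _ (by linarith) (by linarith),
    show 2 - (1 + s) = 1 - s by ring, Nat.cast_succ]

end minWith

theorem stmt_9 (k : ℕ) (hk : 2 ≤ k) (s : ℝ) (hs0 : -1 ≤ s) (hs1 : s ≤ 0) :
    (((Measure.pi fun _ : Fin (k - 1) => unif).prod unif)
        {p : (Fin (k - 1) → ℝ) × ℝ |
          |min (Finset.univ.inf' (Finset.univ_nonempty_iff.2 ⟨⟨0, by omega⟩⟩) p.1) s| < |p.2|}).toReal
      = ((2 : ℝ) ^ k - (1 - s) ^ k) / (k * 2 ^ (k - 1)) := by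
  have hne : (Finset.univ : Finset (Fin (k - 1))).Nonempty :=
    Finset.univ_nonempty_iff.2 ⟨⟨0, by omega⟩⟩
  change (((Measure.pi fun _ : Fin (k - 1) => unif).prod unif)
    {p | |minWith hne s p.1| < |p.2|}).toReal = _
  rw [prod_unif_abs_lt_abs _ (continuous_minWith hne s).measurable]
  simp_rw [abs_of_nonpos ((minWith_le _).trans hs1), sub_neg_eq_add]
  rw [lintegral_one_add_minWith hs0 (by linarith), Fintype.card_fin,
    Nat.sub_add_cancel (by omega : 1 ≤ k), ENNReal.toReal_ofReal]
  exact div_nonneg (sub_nonneg.2 (pow_le_pow_left₀ (by linarith) (by linarith) k)) (by positivity)
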